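/- arXiv:2110.15446 — 12 statements merged into one kernel-verified Lean document; each statement's English description precedes it below -/
import Mathlib

section
/- A combinatorial choice function is path independent if and only if it satisfies both substitutability and irrelevance of rejected elements (IRE). -/
/-- A combinatorial choice function is path independent iff it satisfies
substitutability and irrelevance of rejected elements (IRE). -/
theorem pathIndependent_iff_substitutable_and_IRE
    {E : Type*} [DecidableEq E] (C : Finset E → Finset E)
    (hC : ∀ S, C S ⊆ S) :
    (∀ S T, C (S ∪ T) = C (C S ∪ C T)) ↔
      ((∀ S T, T ⊆ S → C S ∩ T ⊆ C T) ∧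
        (∀ S T, C S ⊆ T → T ⊆ S → C S = C T)) := by
  constructor
  · intro hPI
    have hidem : ∀ S, C (C S) = C S := by
      intro S
      have := hPI S S
      simp only [Finset.union_self] at this
      exact this.symm
    constructor
    · intro S T hTS x hx
      obtain ⟨hxCS, hxT⟩ := Finset.mem_inter.mp hx
      have h2 : C S = C (C (S \ T) ∪ C T) := by
        calc C S = C ((S \ T) ∪ T) := by
              rw [Finset.sdiff_union_self_eq_union, Finset.union_eq_left.mpr hTS]
          _ = C (C (S \ T) ∪ C T) := hPI _ _
      have hx' : x ∈ C (S \ T) ∪ C T := hC _ (h2 ▸ hxCS)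
      rcases Finset.mem_union.mp hx' with h | h
      · exact absurd hxT (Finset.mem_sdiff.mp (hC _ h)).2
      · exact h
    · intro S T h1 h2
      have e1 : C S = C (C T ∪ C S) := by
        calc C S = C (T ∪ S) := by rw [Finset.union_eq_right.mpr h2]
          _ = C (C T ∪ C S) := hPI _ _
      have e2 : C T = C (C T ∪ C S) := by
        calc C T = C (T ∪ C S) := by rw [Finset.union_eq_left.mpr h1]
          _ = C (C T ∪ C (C S)) := hPI _ _
          _ = C (C T ∪ C S) := by rw [hidem]
      exact e1.trans e2.symm
  · rintro ⟨hsub, hIRE⟩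
    have key : ∀ S T, C (S ∪ T) = C (C S ∪ T) := by
      intro S T
      apply hIRE
      · intro x hx
        rcases Finset.mem_union.mp (hC _ hx) with h | h
        · exact Finset.mem_union_left _
            (hsub (S ∪ T) S Finset.subset_union_left (Finset.mem_inter.mpr ⟨hx, h⟩))
        · exact Finset.mem_union_right _ h
      · exact Finset.union_subset_union_left (hC S)
    intro S T
    rw [key S T, Finset.union_comm (C S) T, key T (C S), Finset.union_comm (C T) (C S)]
end

section
/- If a combinatorial choice function satisfies substitutability and size monotonicity, then it is path independent. -/
/-- Substitutability together with size monotonicity implies path independence. -/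
theorem pathIndependent_of_substitutable_of_sizeMonotone
    {E : Type*} [DecidableEq E] (C : Finset E → Finset E)
    (hC : ∀ S, C S ⊆ S)
    (hsub : ∀ S T, T ⊆ S → C S ∩ T ⊆ C T)
    (hmono : ∀ S T, T ⊆ S → (C T).card ≤ (C S).card) :
    ∀ S T, C (S ∪ T) = C (C S ∪ C T) := by
  -- irrelevance of rejected contracts
  have irc : ∀ S T, C S ⊆ T → T ⊆ S → C T = C S := by
    intro S T h1 h2
    have hsubset : C S ⊆ C T := by
      intro x hx
      exact hsub S T h2 (Finset.mem_inter.2 ⟨hx, h1 hx⟩)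
    exact (Finset.eq_of_subset_of_card_le hsubset (hmono S T h2)).symm
  intro S T
  have hBA : C S ∪ C T ⊆ S ∪ T := Finset.union_subset_union (hC S) (hC T)
  have hCA : C (S ∪ T) ⊆ C S ∪ C T := by
    intro x hx
    rcases Finset.mem_union.1 (hC _ hx) with h | h
    · exact Finset.mem_union_left _
        (hsub (S ∪ T) S Finset.subset_union_left (Finset.mem_inter.2 ⟨hx, h⟩))
    · exact Finset.mem_union_right _
        (hsub (S ∪ T) T Finset.subset_union_right (Finset.mem_inter.2 ⟨hx, h⟩))
  exact (irc (S ∪ T) (C S ∪ C T) hCA hBA).symm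
end

section
/- A combinatorial choice function satisfies substitutability if and only if it satisfies subadditivity: for all S, T, C(S ∪ T) ⊆ C(S) ∪ C(T). -/
/-- Substitutability is equivalent to subadditivity. -/
theorem substitutable_iff_subadditive
    {E : Type*} [DecidableEq E] (C : Finset E → Finset E)
    (hC : ∀ S, C S ⊆ S) :
    (∀ S T, T ⊆ S → C S ∩ T ⊆ C T) ↔
      (∀ S T, C (S ∪ T) ⊆ C S ∪ C T) := by
  constructor
  · intro h S T x hx
    by_cases hxS : x ∈ S
    · exact Finset.mem_union_left _ (h (S ∪ T) S Finset.subset_union_left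
        (Finset.mem_inter.mpr ⟨hx, hxS⟩))
    · have hxT : x ∈ T := (Finset.mem_union.mp (hC _ hx)).resolve_left hxS
      exact Finset.mem_union_right _ (h (S ∪ T) T Finset.subset_union_right
        (Finset.mem_inter.mpr ⟨hx, hxT⟩))
  · intro h S T hTS x hx
    obtain ⟨hxC, hxT⟩ := Finset.mem_inter.mp hx
    have hS : S = (S \ T) ∪ T := by
      ext y; simp [Finset.mem_sdiff, Finset.mem_union]
      tauto
    have := h (S \ T) T (hS ▸ hxC)
    rcases Finset.mem_union.mp this with h1 | h1
    · exact absurd (hC _ h1) (by simp [hxT])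
    · exact h1
end

section
/- A choice function C is path independent if and only if it satisfies the equation C(S ∪ T) = C(C(S) ∪ T) for all S, T. -/
/-- Path independence is equivalent to the equation C(S ∪ T) = C(C(S) ∪ T). -/
theorem pathIndependent_iff_leftContraction
    {E : Type*} [DecidableEq E] (C : Finset E → Finset E)
    (hC : ∀ S, C S ⊆ S) :
    (∀ S T, C (S ∪ T) = C (C S ∪ C T)) ↔
      (∀ S T, C (S ∪ T) = C (C S ∪ T)) := by
  constructor
  · intro h S T
    have idem : ∀ S, C (C S) = C S := by
      intro S
      have := h S S
      simpa using this.symm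
    calc C (S ∪ T) = C (C S ∪ C T) := h S T
      _ = C (C (C S) ∪ C T) := by rw [idem]
      _ = C (C S ∪ T) := (h (C S) T).symm
  · intro h S T
    calc C (S ∪ T) = C (C S ∪ T) := h S T
      _ = C (T ∪ C S) := by rw [Finset.union_comm]
      _ = C (C T ∪ C S) := h T (C S)
      _ = C (C S ∪ C T) := by rw [Finset.union_comm]
end

section
/- For a path independent choice function, if S is a maximal option set and a ∈ C(S), then S \ {a} is a maximal option set. -/
/-- For a path independent choice function, removing a chosen element from a
maximal option set yields a maximal option set. -/
theorem erase_chosen_maximal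
    {E : Type*} [DecidableEq E] (C : Finset E → Finset E)
    (hC : ∀ S, C S ⊆ S)
    (hPI : ∀ S T, C (S ∪ T) = C (C S ∪ C T))
    (S : Finset E)
    (hmax : ∀ T, S ⊆ T → C T = C S → T = S)
    (a : E) (ha : a ∈ C S) :
    ∀ T, S.erase a ⊆ T → C T = C (S.erase a) → T = S.erase a := by
  intro T hsub hCT
  have haS : a ∈ S := hC S ha
  have hSeq : S.erase a ∪ {a} = S := by
    ext x
    simp only [Finset.mem_union, Finset.mem_erase, Finset.mem_singleton]
    constructor
    · rintro (⟨_, hx⟩ | rfl) <;> assumption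
    · intro hx
      by_cases h : x = a
      · exact Or.inr h
      · exact Or.inl ⟨h, hx⟩
  have hCS : C S = C (C (S.erase a) ∪ C {a}) :=
    calc C S = C (S.erase a ∪ {a}) := by rw [hSeq]
    _ = C (C (S.erase a) ∪ C {a}) := hPI _ _
  have hTa : C (T ∪ {a}) = C S := by
    rw [hPI T {a}, hCT, ← hCS]
  have hST : S ⊆ T ∪ {a} := by
    rw [← hSeq]; exact Finset.union_subset_union hsub subset_rfl
  have hTeq : T ∪ {a} = S := hmax _ hST hTa
  have haT : a ∉ T := by
    intro haT
    have : T = S := by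
      rw [← hTeq]; ext x; simp only [Finset.mem_union, Finset.mem_singleton]
      constructor
      · intro h; exact Or.inl h
      · rintro (h | rfl) <;> assumption
    rw [this] at hCT
    have := hCT ▸ ha
    exact (Finset.mem_erase.mp (hC _ this)).1 rfl
  have : T = (T ∪ {a}).erase a := by
    ext x
    simp only [Finset.mem_erase, Finset.mem_union, Finset.mem_singleton]
    constructor
    · intro hx; exact ⟨fun h => haT (h ▸ hx), Or.inl hx⟩
    · rintro ⟨hne, h | rfl⟩
      · exact h
      · exact absurd rfl hne
  rw [this, hTeq]
end

section
/- For a path independent choice function, the family of maximal option sets is closed under intersection: if S₁ and S₂ are maximal, then S₁ ∩ S₂ is maximal. -/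
/-- For a path independent choice function, the family of maximal option sets
is closed under intersection. -/
theorem inter_maximal
    {E : Type*} [DecidableEq E] (C : Finset E → Finset E)
    (hC : ∀ S, C S ⊆ S)
    (hPI : ∀ S T, C (S ∪ T) = C (C S ∪ C T))
    (S₁ S₂ : Finset E)
    (hmax₁ : ∀ T, S₁ ⊆ T → C T = C S₁ → T = S₁)
    (hmax₂ : ∀ T, S₂ ⊆ T → C T = C S₂ → T = S₂) :
    ∀ T, S₁ ∩ S₂ ⊆ T → C T = C (S₁ ∩ S₂) → T = S₁ ∩ S₂ := by
  intro T hsub hCT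
  have key : ∀ S : Finset E, S₁ ∩ S₂ ⊆ S → C (T ∪ S) = C S := by
    intro S hS
    have h1 : C (T ∪ S) = C (C (S₁ ∩ S₂) ∪ C S) := by rw [hPI, hCT]
    have h2 : C S = C ((S₁ ∩ S₂) ∪ S) := by rw [Finset.union_eq_right.mpr hS]
    rw [h1, h2, ← hPI, ← Finset.union_assoc, Finset.union_self]
  have hT1 : T ⊆ S₁ := by
    have := hmax₁ (T ∪ S₁) Finset.subset_union_right
      (key S₁ Finset.inter_subset_left)
    exact fun x hx => this ▸ Finset.mem_union_left _ hx
  have hT2 : T ⊆ S₂ := by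
    have := hmax₂ (T ∪ S₂) Finset.subset_union_right
      (key S₂ Finset.inter_subset_right)
    exact fun x hx => this ▸ Finset.mem_union_left _ hx
  exact Finset.Subset.antisymm (Finset.subset_inter hT1 hT2) hsub
end

section
/- If a choice function has a maximizer-collecting rationalization (its choice from each set S is the union over a finite family of linear orders of the maximum element of S under each order), then it is path independent. -/
/-!
For a single linear order `r`, the `r`-maximum of `S ∪ T` is the larger of the `r`-maxima of
`S` and of `T`, and both of these belong to `C S ∪ C T ⊆ S ∪ T`; so `S ∪ T` and `C S ∪ C T`
have the same `r`-maximum. Collecting over all orders of the family gives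
`C (S ∪ T) = C (C S ∪ C T)`.
-/

namespace Finset

variable {E : Type*} (r : E → E → Prop)

/-- `r a b` is read as `a ≽ b`, so this is `a = max(S, ≽)`. -/
def IsGreatestBy (S : Finset E) (a : E) : Prop :=
  a ∈ S ∧ ∀ b ∈ S, r a b

variable {r}

theorem IsGreatestBy.of_subset {S T : Finset E} {a : E} (h : IsGreatestBy r S a) (hTS : T ⊆ S)
    (ha : a ∈ T) : IsGreatestBy r T a :=
  ⟨ha, fun b hb => h.2 b (hTS hb)⟩

theorem exists_isGreatestBy [IsTrans E r] [Std.Total r] {S : Finset E} (hS : S.Nonempty) :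
    ∃ a, IsGreatestBy r S a := by
  have : Nonempty S := hS.to_subtype
  have hdir : Directed (Function.swap r) (Subtype.val : S → E) := fun x y =>
    (Std.Total.total (r := r) x.1 y.1).elim (fun h => ⟨x, refl_of r _, h⟩)
      (fun h => ⟨y, h, refl_of r _⟩)
  obtain ⟨m, hm⟩ := hdir.finset_le univ
  exact ⟨m, m.2, fun b hb => hm ⟨b, hb⟩ (mem_univ _)⟩

theorem isGreatestBy_iff_of_subset [IsTrans E r] [Std.Total r] {A S : Finset E} {a : E}
    (hAS : A ⊆ S) (hmax : ∀ m, IsGreatestBy r S m → m ∈ A) :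
    IsGreatestBy r A a ↔ IsGreatestBy r S a := by
  constructor
  · rintro ⟨haA, ha⟩
    refine ⟨hAS haA, fun b hb => ?_⟩
    obtain ⟨m, hm⟩ := exists_isGreatestBy (r := r) ⟨b, hb⟩
    exact _root_.trans (ha m (hmax m hm)) (hm.2 b hb)
  · intro ha
    exact ha.of_subset hAS (hmax a ha)

end Finset

open Finset

/-- A choice function with a maximizer-collecting rationalization is path
independent. -/
theorem pathIndependent_of_maximizerCollecting
    {E : Type*} [DecidableEq E] (C : Finset E → Finset E)
    (L : List (E → E → Prop))
    (hL : ∀ r ∈ L, IsLinearOrder E r)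
    (hempty : C ∅ = ∅)
    (hMC : ∀ S : Finset E, S.Nonempty →
      ∀ a : E, a ∈ C S ↔ ∃ r ∈ L, a ∈ S ∧ ∀ b ∈ S, r a b) :
    ∀ S T, C (S ∪ T) = C (C S ∪ C T) := by
  have hC : ∀ S a, a ∈ C S ↔ ∃ r ∈ L, IsGreatestBy r S a := by
    intro S a
    rcases S.eq_empty_or_nonempty with rfl | hS
    · simp [hempty, IsGreatestBy]
    · exact hMC S hS a
  have hCsub : ∀ S, C S ⊆ S := fun S a ha => by
    obtain ⟨r, -, haS, -⟩ := (hC S a).1 ha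
    exact haS
  intro S T
  ext a
  rw [hC, hC]
  refine exists_congr fun r => and_congr_right fun hr => ?_
  have := hL r hr
  refine (isGreatestBy_iff_of_subset (union_subset_union (hCsub S) (hCsub T)) ?_).symm
  rintro m hm
  rcases mem_union.1 hm.1 with hmS | hmT
  · exact mem_union_left _ ((hC S m).2 ⟨r, hr, hm.of_subset subset_union_left hmS⟩)
  · exact mem_union_right _ ((hC T m).2 ⟨r, hr, hm.of_subset subset_union_right hmT⟩)
end

section
/- A combinatorial choice function is path independent if and only if it has a maximizer-collecting rationalization, i.e., there is a finite sequence of linear orders on E such that the choice from every nonempty S equals the set of maximizers of S under these orders. -/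
/-!
Say that `C` chooses the best elements of a linear order `r` when the `r`-best element of every
set is chosen by `C`; the orders with this property will rationalize `C`. Path independence gives
heritage (an element chosen from `T` is chosen from every `S ⊆ T` containing it) and outcast
(if `C T ⊆ S ⊆ T`, everything chosen from `S` is chosen from `T`). Listing `E` greedily, each
element chosen from the set of those not listed yet, yields such an order by heritage. Given
`a ∈ C S`, outcast lets one steer such a listing so that `a` comes before the rest of `S`: while
`a` is not chosen from the remaining set `T ⊇ S`, some element chosen from `T` lies outside `S`
and can be listed next. Conversely, for a linear order whose best elements are always chosen,
the best element of `S ∪ T` is the best of `S` or of `T`, hence also the best of `C S ∪ C T`.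
-/

open Finset Function

section Best

variable {E : Type*}

def IsBest (r : E → E → Prop) (S : Finset E) (a : E) : Prop :=
  a ∈ S ∧ ∀ b ∈ S, r a b

def ChoosesBest (C : Finset E → Finset E) (r : E → E → Prop) : Prop :=
  ∀ S a, IsBest r S a → a ∈ C S

theorem IsBest.mono {r : E → E → Prop} {S T : Finset E} {a : E} (h : IsBest r T a)
    (hST : S ⊆ T) (ha : a ∈ S) : IsBest r S a :=
  ⟨ha, fun b hb => h.2 b (hST hb)⟩

theorem exists_isBest (r : E → E → Prop) [IsLinearOrder E r] {S : Finset E}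
    (hS : S.Nonempty) : ∃ a, IsBest r S a := by
  have : Nonempty S := hS.to_subtype
  have hdir : Directed (swap r) ((↑) : S → E) := fun x y =>
    (total_of r x y).elim (fun h => ⟨x, refl_of r _, h⟩) (fun h => ⟨y, h, refl_of r _⟩)
  obtain ⟨m, hm⟩ := hdir.finset_le univ
  exact ⟨m, m.2, fun b hb => hm ⟨b, hb⟩ (mem_univ _)⟩

end Best

section ChoiceFunction

variable {E : Type*} [DecidableEq E] {C : Finset E → Finset E}

def PathIndependent (C : Finset E → Finset E) : Prop :=
  ∀ S T, C (S ∪ T) = C (C S ∪ C T)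

theorem isBest_union_iff (hC : ∀ S, C S ⊆ S) {r : E → E → Prop} [IsLinearOrder E r]
    (hr : ChoosesBest C r) {S T : Finset E} {a : E} :
    IsBest r (S ∪ T) a ↔ IsBest r (C S ∪ C T) a := by
  have hsub : C S ∪ C T ⊆ S ∪ T := union_subset_union (hC S) (hC T)
  constructor
  · intro h
    refine h.mono hsub ?_
    rcases mem_union.1 h.1 with ha | ha
    · exact mem_union_left _ (hr S a (h.mono subset_union_left ha))
    · exact mem_union_right _ (hr T a (h.mono subset_union_right ha))
  · intro h
    have beats : ∀ U, C U ⊆ C S ∪ C T → ∀ b ∈ U, r a b := fun U hU b hb => by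
      obtain ⟨m, hm⟩ := exists_isBest r ⟨b, hb⟩
      exact _root_.trans (h.2 m (hU (hr U m hm))) (hm.2 b hb)
    refine ⟨hsub h.1, fun b hb => ?_⟩
    rcases mem_union.1 hb with hb | hb
    · exact beats S subset_union_left b hb
    · exact beats T subset_union_right b hb

theorem pathIndependent_of_rationalization (hC : ∀ S, C S ⊆ S) (L : List (E → E → Prop))
    (hlin : ∀ r ∈ L, IsLinearOrder E r)
    (hrat : ∀ S : Finset E, S.Nonempty → ∀ a, a ∈ C S ↔ ∃ r ∈ L, IsBest r S a) :
    PathIndependent C := by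
  have hrat' : ∀ S a, a ∈ C S ↔ ∃ r ∈ L, IsBest r S a := by
    intro S a
    rcases S.eq_empty_or_nonempty with rfl | hS
    · simp [IsBest, subset_empty.1 (hC ∅)]
    · exact hrat S hS a
  have hbest : ∀ r ∈ L, ChoosesBest C r := fun r hr S a ha => (hrat' S a).2 ⟨r, hr, ha⟩
  intro S T
  ext a
  simp only [hrat']
  exact exists_congr fun r => and_congr_right fun hr =>
    have := hlin r hr
    isBest_union_iff hC (hbest r hr)

theorem PathIndependent.mem_of_subset (hPI : PathIndependent C) (hC : ∀ S, C S ⊆ S)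
    {S T : Finset E} {a : E} (ha : a ∈ C T) (haS : a ∈ S) (hST : S ⊆ T) : a ∈ C S := by
  have h := hPI S (T \ S)
  rw [union_sdiff_of_subset hST] at h
  rw [h] at ha
  rcases mem_union.1 (hC _ ha) with ha | ha
  · exact ha
  · exact absurd haS (mem_sdiff.1 (hC _ ha)).2

theorem PathIndependent.mem_of_choice_subset (hPI : PathIndependent C) (hC : ∀ S, C S ⊆ S)
    {S T : Finset E} {a : E} (ha : a ∈ C S) (hST : S ⊆ T) (hTS : C T ⊆ S) : a ∈ C T := by
  have h := hPI S T
  rw [union_eq_right.2 hST] at h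
  rw [h]
  exact hPI.mem_of_subset hC ha (mem_union_left _ ha) (union_subset (hC S) hTS)

def IsGreedy (C : Finset E → Finset E) : List E → Prop
  | [] => True
  | x :: xs => x ∈ C (x :: xs).toFinset ∧ IsGreedy C xs

theorem IsGreedy.mem_of_idxOf_le (hPI : PathIndependent C) (hC : ∀ S, C S ⊆ S) :
    ∀ {l : List E}, IsGreedy C l → ∀ {S : Finset E} {a : E}, S ⊆ l.toFinset → a ∈ S →
      (∀ b ∈ S, l.idxOf a ≤ l.idxOf b) → a ∈ C S
  | [], _, _, _, hS, ha, _ => by simpa using hS ha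
  | x :: xs, ⟨hx, hxs⟩, S, a, hS, ha, hmin => by
    by_cases hxS : x ∈ S
    · obtain rfl : a = x := by
        by_contra hax
        have := hmin x hxS
        rw [List.idxOf_cons_self, List.idxOf_cons_ne _ (Ne.symm hax)] at this
        omega
      exact hPI.mem_of_subset hC hx ha hS
    · have hxb : ∀ b ∈ S, x ≠ b := fun b hb h => hxS (h ▸ hb)
      refine hxs.mem_of_idxOf_le hPI hC (fun b hb => ?_) ha fun b hb => ?_
      · simpa [(hxb b hb).symm] using hS hb
      · simpa [List.idxOf_cons_ne _ (hxb a ha), List.idxOf_cons_ne _ (hxb b hb)] using hmin b hb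

theorem IsGreedy.cons (hC : ∀ S, C S ⊆ S) {x : E} {l : List E} {T : Finset E} (hx : x ∈ C T)
    (hl : IsGreedy C l) (hlT : l.toFinset = T.erase x) :
    IsGreedy C (x :: l) ∧ (x :: l).toFinset = T := by
  have hT : (x :: l).toFinset = T := by
    rw [List.toFinset_cons, hlT, insert_erase (hC T hx)]
  exact ⟨⟨hT ▸ hx, hl⟩, hT⟩

theorem exists_isGreedy (hC : ∀ S, C S ⊆ S)
    (hne : ∀ S : Finset E, S.Nonempty → (C S).Nonempty) (T : Finset E) :
    ∃ l, IsGreedy C l ∧ l.toFinset = T := by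
  induction T using strongInduction with
  | _ T ih =>
    rcases T.eq_empty_or_nonempty with rfl | hT
    · exact ⟨[], trivial, rfl⟩
    · obtain ⟨x, hx⟩ := hne T hT
      obtain ⟨l, hl, hlT⟩ := ih (T.erase x) (erase_ssubset (hC T hx))
      exact ⟨x :: l, IsGreedy.cons hC hx hl hlT⟩

theorem PathIndependent.exists_isGreedy_idxOf_le (hPI : PathIndependent C)
    (hC : ∀ S, C S ⊆ S) (hne : ∀ S : Finset E, S.Nonempty → (C S).Nonempty) (T : Finset E)
    {S : Finset E} {a : E} (ha : a ∈ C S) (hST : S ⊆ T) :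
    ∃ l, IsGreedy C l ∧ l.toFinset = T ∧ ∀ b ∈ S, l.idxOf a ≤ l.idxOf b := by
  induction T using strongInduction with
  | _ T ih =>
    by_cases haT : a ∈ C T
    · obtain ⟨l, hl, hlT⟩ := exists_isGreedy hC hne (T.erase a)
      exact ⟨a :: l, (hl.cons hC haT hlT).1, (hl.cons hC haT hlT).2, by simp⟩
    · obtain ⟨x, hxT, hxS⟩ :=
        not_subset.1 fun hTS => haT (hPI.mem_of_choice_subset hC ha hST hTS)
      have hxb : ∀ b ∈ S, x ≠ b := fun b hb h => hxS (h ▸ hb)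
      have hST' : S ⊆ T.erase x := fun b hb => mem_erase.2 ⟨(hxb b hb).symm, hST hb⟩
      obtain ⟨l, hl, hlT, hmin⟩ := ih (T.erase x) (erase_ssubset (hC T hxT)) hST'
      refine ⟨x :: l, (hl.cons hC hxT hlT).1, (hl.cons hC hxT hlT).2, fun b hb => ?_⟩
      have ha' := hxb a (hC S ha)
      simpa [List.idxOf_cons_ne _ ha', List.idxOf_cons_ne _ (hxb b hb)] using hmin b hb

theorem PathIndependent.exists_choosesBest_isBest [Fintype E] (hPI : PathIndependent C)
    (hC : ∀ S, C S ⊆ S) (hne : ∀ S : Finset E, S.Nonempty → (C S).Nonempty)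
    {S : Finset E} {a : E} (ha : a ∈ C S) :
    ∃ r, IsLinearOrder E r ∧ ChoosesBest C r ∧ IsBest r S a := by
  obtain ⟨l, hl, hlE, hmin⟩ := hPI.exists_isGreedy_idxOf_le hC hne univ ha (subset_univ S)
  have hmem : ∀ x, x ∈ l := fun x => List.mem_toFinset.1 (hlE ▸ mem_univ x)
  refine ⟨(· ≤ ·) on l.idxOf,
    Injective.isLinearOrder_onFun (· ≤ ·) (fun x y h => (List.idxOf_inj (hmem x)).1 h),
    fun S' a' h => hl.mem_of_idxOf_le hPI hC (hlE ▸ subset_univ S') h.1 h.2,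
    hC S ha, hmin⟩

theorem exists_rationalization_of_choosesBest [Fintype E]
    (h : ∀ S a, a ∈ C S → ∃ r, IsLinearOrder E r ∧ ChoosesBest C r ∧ IsBest r S a) :
    ∃ L : List (E → E → Prop), (∀ r ∈ L, IsLinearOrder E r) ∧
      ∀ S a, a ∈ C S ↔ ∃ r ∈ L, IsBest r S a := by
  classical
  refine ⟨(univ.filter fun r => IsLinearOrder E r ∧ ChoosesBest C r).toList,
    fun r hr => (mem_filter.1 (mem_toList.1 hr)).2.1, fun S a => ⟨fun ha => ?_, ?_⟩⟩
  · obtain ⟨r, hlin, hr, hbest⟩ := h S a ha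
    exact ⟨r, mem_toList.2 (mem_filter.2 ⟨mem_univ r, hlin, hr⟩), hbest⟩
  · rintro ⟨r, hr, hbest⟩
    exact (mem_filter.1 (mem_toList.1 hr)).2.2 S a hbest

end ChoiceFunction

/-- A combinatorial choice function is path independent iff it has a
maximizer-collecting rationalization. -/
theorem pathIndependent_iff_maximizerCollecting
    {E : Type*} [DecidableEq E] [Fintype E] (C : Finset E → Finset E)
    (hC : ∀ S, C S ⊆ S)
    (hne : ∀ S : Finset E, S.Nonempty → (C S).Nonempty) :
    (∀ S T, C (S ∪ T) = C (C S ∪ C T)) ↔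
      ∃ L : List (E → E → Prop),
        (∀ r ∈ L, IsLinearOrder E r) ∧
        (∀ S : Finset E, S.Nonempty →
          ∀ a : E, a ∈ C S ↔ ∃ r ∈ L, a ∈ S ∧ ∀ b ∈ S, r a b) := by
  constructor
  · intro hPI
    obtain ⟨L, hlin, hrat⟩ := exists_rationalization_of_choosesBest fun S a ha =>
      PathIndependent.exists_choosesBest_isBest hPI hC hne ha
    exact ⟨L, hlin, fun S _ => hrat S⟩
  · rintro ⟨L, hlin, hrat⟩
    exact pathIndependent_of_rationalization hC L hlin hrat
end

section
/- Every choice function defined by sequenced priority maximization with rivalry is capacity-filling and satisfies substitutability. -/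
/-- Sequentially collected maximizers with rivalry: after `m` steps, the set of
elements picked so far, where step `m` picks the `≽ₘ`-maximal remaining
element of `S`. -/
def seqPick {E : Type*} [DecidableEq E] (q : ℕ) (r : Fin q → LinearOrder E)
    (S : Finset E) : ℕ → Finset E
  | 0 => ∅
  | m + 1 =>
    seqPick q r S m ∪
      (if h : m < q ∧ (S \ seqPick q r S m).Nonempty then
        {@Finset.max' E (r ⟨m, h.1⟩) (S \ seqPick q r S m) h.2} else ∅)

/-- The sequenced priority maximization with rivalry choice function. -/
def seqChoice {E : Type*} [DecidableEq E] (q : ℕ) (r : Fin q → LinearOrder E)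
    (S : Finset E) : Finset E :=
  if S.card ≤ q then S else seqPick q r S q

lemma seqPick_subset {E : Type*} [DecidableEq E] (q : ℕ) (r : Fin q → LinearOrder E)
    (S : Finset E) : ∀ m, seqPick q r S m ⊆ S := by
  intro m
  induction m with
  | zero => simp [seqPick]
  | succ m ih =>
    rw [seqPick]
    apply Finset.union_subset ih
    split
    · next h =>
      intro x hx
      rw [Finset.mem_singleton] at hx
      subst hx
      have hm := @Finset.max'_mem E (r ⟨m, h.1⟩) _ h.2
      exact (Finset.mem_sdiff.1 hm).1
    · simp

lemma seqPick_card {E : Type*} [DecidableEq E] (q : ℕ) (r : Fin q → LinearOrder E)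
    (S : Finset E) : ∀ m, m ≤ q → (seqPick q r S m).card = min m S.card := by
  intro m
  induction m with
  | zero => simp [seqPick]
  | succ m ih =>
    intro hm
    have hmq : m < q := hm
    have ih' := ih (le_of_lt hmq)
    rw [seqPick]
    by_cases hne : (S \ seqPick q r S m).Nonempty
    · rw [dif_pos ⟨hmq, hne⟩]
      have hx := @Finset.max'_mem E (r ⟨m, hmq⟩) _ hne
      rw [Finset.mem_sdiff] at hx
      rw [Finset.card_union_of_disjoint (Finset.disjoint_singleton_right.2 hx.2), ih',
        Finset.card_singleton]
      have hlt : m < S.card := by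
        by_contra hge
        push_neg at hge
        have heq : seqPick q r S m = S :=
          Finset.eq_of_subset_of_card_le (seqPick_subset q r S m) (by omega)
        rw [heq, Finset.sdiff_self] at hne
        exact hne.ne_empty rfl
      omega
    · rw [Finset.not_nonempty_iff_eq_empty, Finset.sdiff_eq_empty_iff_subset] at hne
      have heq : seqPick q r S m = S :=
        Finset.Subset.antisymm (seqPick_subset q r S m) hne
      rw [dif_neg (by rw [heq]; simp)]
      rw [Finset.union_empty, heq]
      have : S.card ≤ m := by
        have := ih'
        rw [heq] at this
        omega
      omega

lemma seqPick_substitutable {E : Type*} [DecidableEq E] (q : ℕ) (r : Fin q → LinearOrder E)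
    (S T : Finset E) (hTS : T ⊆ S) :
    ∀ m, seqPick q r S m ∩ T ⊆ seqPick q r T m := by
  intro m
  induction m with
  | zero => simp [seqPick]
  | succ m ih =>
    rw [seqPick, seqPick, Finset.union_inter_distrib_right]
    apply Finset.union_subset
    · exact ih.trans Finset.subset_union_left
    · intro x hx
      rw [Finset.mem_inter] at hx
      obtain ⟨hx1, hxT⟩ := hx
      split at hx1
      case isTrue h =>
        rw [Finset.mem_singleton] at hx1
        subst hx1
        by_cases hxp : @Finset.max' E (r ⟨m, h.1⟩) _ h.2 ∈ seqPick q r T m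
        · exact Finset.mem_union_left _ hxp
        · have hsub : T \ seqPick q r T m ⊆ S \ seqPick q r S m := by
            intro y hy
            rw [Finset.mem_sdiff] at hy ⊢
            exact ⟨hTS hy.1, fun hyS => hy.2 (ih (Finset.mem_inter.2 ⟨hyS, hy.1⟩))⟩
          have hneT : (T \ seqPick q r T m).Nonempty :=
            ⟨_, Finset.mem_sdiff.2 ⟨hxT, hxp⟩⟩
          rw [dif_pos ⟨h.1, hneT⟩]
          apply Finset.mem_union_right
          rw [Finset.mem_singleton]
          have h1 := @Finset.le_max' E (r ⟨m, h.1⟩) _ _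
            (Finset.mem_sdiff.2 ⟨hxT, hxp⟩)
          have h2 := @Finset.le_max' E (r ⟨m, h.1⟩) _ _
            (hsub (@Finset.max'_mem E (r ⟨m, h.1⟩) _ hneT))
          exact @le_antisymm E (r ⟨m, h.1⟩).toPartialOrder _ _ h1 h2
      case isFalse => simp at hx1

/-- Every sequenced priority maximization with rivalry choice function is
capacity-filling and substitutable. -/
theorem seqChoice_capacityFilling_substitutable
    {E : Type*} [DecidableEq E] (q : ℕ) (r : Fin q → LinearOrder E) :
    (∀ S : Finset E, (seqChoice q r S).card = min S.card q) ∧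
      (∀ S T : Finset E, T ⊆ S → seqChoice q r S ∩ T ⊆ seqChoice q r T) := by
  constructor
  · intro S
    unfold seqChoice
    split
    · next h => omega
    · next h =>
      rw [seqPick_card q r S q le_rfl]
      omega
  · intro S T hTS x hx
    rw [Finset.mem_inter] at hx
    obtain ⟨hxS, hxT⟩ := hx
    unfold seqChoice at *
    by_cases hT : T.card ≤ q
    · rw [if_pos hT]; exact hxT
    · have hS : ¬ S.card ≤ q := fun hS => hT (le_trans (Finset.card_le_card hTS) hS)
      rw [if_neg hS] at hxS
      rw [if_neg hT]
      exact seqPick_substitutable q r S T hTS q (Finset.mem_inter.2 ⟨hxS, hxT⟩)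
end

section
/- If C₁ and C₂ are capacity-filling (for capacities q₁, q₂ respectively) choice functions satisfying substitutability, then the two-stage composition H, defined by H(S) = C₁(S) ∪ C₂(S \ C₁(S)), is capacity-filling (for capacity q₁ + q₂) and satisfies substitutability. -/
/-- The two-stage composition of two capacity-filling substitutable choice
functions is capacity-filling (for the sum of the capacities) and
substitutable. -/
theorem twoStage_capacityFilling_substitutable
    {E : Type*} [DecidableEq E] (C₁ C₂ : Finset E → Finset E) (q₁ q₂ : ℕ)
    (hC₁ : ∀ S, C₁ S ⊆ S) (hC₂ : ∀ S, C₂ S ⊆ S)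
    (hfill₁ : ∀ S, (C₁ S).card = min S.card q₁)
    (hfill₂ : ∀ S, (C₂ S).card = min S.card q₂)
    (hsub₁ : ∀ S T, T ⊆ S → C₁ S ∩ T ⊆ C₁ T)
    (hsub₂ : ∀ S T, T ⊆ S → C₂ S ∩ T ⊆ C₂ T) :
    (∀ S : Finset E, ((C₁ S ∪ C₂ (S \ C₁ S)).card = min S.card (q₁ + q₂))) ∧
      (∀ S T : Finset E, T ⊆ S →
        (C₁ S ∪ C₂ (S \ C₁ S)) ∩ T ⊆ C₁ T ∪ C₂ (T \ C₁ T)) := by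
  constructor
  · intro S
    have hdisj : Disjoint (C₁ S) (C₂ (S \ C₁ S)) := by
      apply Finset.disjoint_left.2
      intro x hx hx'
      exact (Finset.mem_sdiff.1 (hC₂ _ hx')).2 hx
    rw [Finset.card_union_of_disjoint hdisj, hfill₁, hfill₂,
      Finset.card_sdiff_of_subset (hC₁ S), hfill₁]
    have := Finset.card_le_card (hC₁ S)
    omega
  · intro S T hTS x hx
    rcases Finset.mem_inter.1 hx with ⟨hxU, hxT⟩
    rcases Finset.mem_union.1 hxU with h1 | h2
    · exact Finset.mem_union_left _ (hsub₁ S T hTS (Finset.mem_inter.2 ⟨h1, hxT⟩))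
    · by_cases hx1 : x ∈ C₁ T
      · exact Finset.mem_union_left _ hx1
      · have hsub : T \ C₁ T ⊆ S \ C₁ S := by
          intro t ht
          rcases Finset.mem_sdiff.1 ht with ⟨htT, htn⟩
          refine Finset.mem_sdiff.2 ⟨hTS htT, fun hc => htn ?_⟩
          exact hsub₁ S T hTS (Finset.mem_inter.2 ⟨hc, htT⟩)
        exact Finset.mem_union_right _
          (hsub₂ _ _ hsub (Finset.mem_inter.2 ⟨h2, Finset.mem_sdiff.2 ⟨hxT, hx1⟩⟩))
end

section
/- In one-to-many matching with objects' choice rules: β-stability implies α-stability, and if every object's choice rule satisfies IRE, then α-stability implies β-stability. -/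
/-- In one-to-many matching with objects' choice rules: β-stability implies
α-stability, and under IRE of every object's choice rule, α-stability implies
β-stability. -/
theorem betaStable_implies_alphaStable_and_IRE_converse
    {A O : Type*} [Fintype A] [DecidableEq A] [DecidableEq O]
    (R : A → Option O → Option O → Prop)
    (hR : ∀ i, IsLinearOrder (Option O) (R i))
    (C : O → Finset A → Finset A)
    (hC : ∀ a S, C a S ⊆ S)
    (μ : A → Option O)
    -- the set of agents matched to object `a`
    (matched : O → Finset A)
    (hmatched : ∀ a i, i ∈ matched a ↔ μ i = some a)
    -- individual stability
    (IndStable : Prop)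
    (hInd : IndStable ↔
      ((∀ i, R i (μ i) none) ∧ ∀ a, C a (matched a) = matched a))
    -- α- and β-stability
    (alphaStable betaStable : Prop)
    (halpha : alphaStable ↔ (IndStable ∧
      ¬∃ (i : A) (a : O), (R i (some a) (μ i) ∧ some a ≠ μ i) ∧
        i ∈ C a (insert i (matched a))))
    (hbeta : betaStable ↔ (IndStable ∧
      ¬∃ (i : A) (a : O), (R i (some a) (μ i) ∧ some a ≠ μ i) ∧
        C a (insert i (matched a)) ≠ matched a)) :
    (betaStable → alphaStable) ∧
      ((∀ a S T, C a S ⊆ T → T ⊆ S → C a T = C a S) →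
        (alphaStable → betaStable)) := by
  constructor
  · intro hb
    rw [hbeta] at hb
    rw [halpha]
    refine ⟨hb.1, fun ⟨i, a, hpref, hmem⟩ => hb.2 ⟨i, a, hpref, ?_⟩⟩
    intro heq
    have hni : i ∉ matched a := fun h => hpref.2 ((hmatched a i).1 h).symm
    exact hni (heq ▸ hmem)
  · intro hIRE ha
    rw [halpha] at ha
    rw [hbeta]
    refine ⟨ha.1, fun ⟨i, a, hpref, hne⟩ => ?_⟩
    have hM : C a (matched a) = matched a := ((hInd.mp ha.1).2) a
    by_cases hmem : i ∈ C a (insert i (matched a))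
    · exact ha.2 ⟨i, a, hpref, hmem⟩
    · have hsub : C a (insert i (matched a)) ⊆ matched a := by
        intro x hx
        have := hC a _ hx
        rcases Finset.mem_insert.mp this with rfl | h
        · exact absurd hx hmem
        · exact h
      have := hIRE a (insert i (matched a)) (matched a) hsub
        (Finset.subset_insert _ _)
      rw [hM] at this
      exact hne this.symm
end

section
/- In one-to-many matching, if every object's choice rule satisfies substitutability, then a matching is α-stable if and only if it is group stable. -/
/-- In one-to-many matching with substitutable objects' choice rules,
α-stability is equivalent to group stability. -/
theorem alphaStable_iff_groupStable_of_substitutable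
    {A O : Type*} [Fintype A] [DecidableEq A] [DecidableEq O]
    (R : A → Option O → Option O → Prop)
    (hR : ∀ i, IsLinearOrder (Option O) (R i))
    (C : O → Finset A → Finset A)
    (hC : ∀ a S, C a S ⊆ S)
    (hsub : ∀ a S T, T ⊆ S → C a S ∩ T ⊆ C a T)
    (μ : A → Option O)
    (matched : O → Finset A)
    (hmatched : ∀ a i, i ∈ matched a ↔ μ i = some a)
    (IndStable : Prop)
    (hInd : IndStable ↔
      ((∀ i, R i (μ i) none) ∧ ∀ a, C a (matched a) = matched a))
    (alphaStable groupStable : Prop)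
    (halpha : alphaStable ↔ (IndStable ∧
      ¬∃ (i : A) (a : O), (R i (some a) (μ i) ∧ some a ≠ μ i) ∧
        i ∈ C a (insert i (matched a))))
    (hgroup : groupStable ↔ (IndStable ∧
      ¬∃ (S : Finset A) (a : O), S.Nonempty ∧
        (∀ i ∈ S, R i (some a) (μ i) ∧ some a ≠ μ i) ∧
        S ⊆ C a (matched a ∪ S))) :
    alphaStable ↔ groupStable := by
  rw [halpha, hgroup]
  constructor
  · rintro ⟨hind, hno⟩
    refine ⟨hind, ?_⟩
    rintro ⟨S, a, ⟨i, hiS⟩, hpref, hsub'⟩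
    apply hno
    refine ⟨i, a, hpref i hiS, ?_⟩
    have h1 : insert i (matched a) ⊆ matched a ∪ S := by
      intro x hx
      rcases Finset.mem_insert.mp hx with h | h
      · exact Finset.mem_union_right _ (h ▸ hiS)
      · exact Finset.mem_union_left _ h
    exact hsub a _ _ h1 (Finset.mem_inter.mpr ⟨hsub' hiS, Finset.mem_insert_self _ _⟩)
  · rintro ⟨hind, hno⟩
    refine ⟨hind, ?_⟩
    rintro ⟨i, a, hpref, hmem⟩
    apply hno
    refine ⟨({i} : Finset A), a, ⟨i, Finset.mem_singleton_self i⟩, ?_, ?_⟩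
    · intro j hj; rw [Finset.mem_singleton] at hj; exact hj ▸ hpref
    · have : matched a ∪ {i} = insert i (matched a) := by
        ext x; simp [or_comm]
      rw [this]; exact Finset.singleton_subset_iff.mpr hmem
end
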